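/- Fix β ∈ ℝᵐ and λ > 0, and let η_t(x) = sign(x)·max(|x| − t, 0) be the soft-thresholding function. Then for all z₁, z₂ ∈ ℝᵐ and every index i = 1,…,m, |η_{λ‖β−z₁‖₂}(z_{1,i}) − η_{λ‖β−z₂‖₂}(z_{2,i})| ≤ max( 2|z_{1,i} − z_{2,i}|, |z_{1,i} − z_{2,i}| + λ‖z₁ − z₂‖₂ ). -/

import Mathlib

open scoped BigOperators

/-- Euclidean norm of a vector in `ℝᵐ`. -/
noncomputable def norm2 {m : ℕ} (v : Fin m → ℝ) : ℝ := Real.sqrt (∑ i, (v i) ^ 2)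

/-- Soft-thresholding with threshold `t`: `η_t(x) = sign(x)·max(|x| − t, 0)`. -/
noncomputable def soft (t x : ℝ) : ℝ := Real.sign x * max (|x| - t) 0

/-!
Write `η_t(x) = x − clamp_{[−t,t]}(x)`. The clamp `max (−t) (min x t)` is built from `max` and
`min`, each 1-Lipschitz for the sup distance, so moving `(t, x)` to `(s, y)` changes `η` by at most
`|x − y| + max |x − y| |t − s|`. With `t = λ‖β − z₁‖₂`, `s = λ‖β − z₂‖₂` the reverse triangle
inequality gives `|t − s| ≤ λ‖z₁ − z₂‖₂`, and `a + max a b = max (2a) (a + b)`.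
-/

lemma soft_eq_sub_clamp {t : ℝ} (ht : 0 ≤ t) (x : ℝ) : soft t x = x - max (-t) (min x t) := by
  unfold soft
  rcases lt_trichotomy x 0 with hx | rfl | hx
  · rw [Real.sign_of_neg hx, abs_of_neg hx]
    simp only [max_def, min_def]
    split_ifs <;> linarith
  · simp [ht]
  · rw [Real.sign_of_pos hx, abs_of_pos hx]
    simp only [max_def, min_def]
    split_ifs <;> linarith

lemma abs_soft_sub_soft_le {t s : ℝ} (ht : 0 ≤ t) (hs : 0 ≤ s) (x y : ℝ) :
    |soft t x - soft s y| ≤ |x - y| + max |x - y| |t - s| := by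
  have hclamp : |max (-t) (min x t) - max (-s) (min y s)| ≤ max |x - y| |t - s| :=
    calc _ ≤ max |-t - -s| |min x t - min y s| := abs_max_sub_max_le_max _ _ _ _
      _ ≤ max |t - s| (max |x - y| |t - s|) := by
          rw [neg_sub_neg, abs_sub_comm]
          exact max_le_max le_rfl (abs_min_sub_min_le_max _ _ _ _)
      _ = max |x - y| |t - s| := by rw [max_comm, max_assoc, max_self]
  rw [soft_eq_sub_clamp ht, soft_eq_sub_clamp hs, sub_sub_sub_comm]
  exact (abs_sub _ _).trans (add_le_add_right hclamp _)

lemma norm2_eq_norm_toLp {m : ℕ} (v : Fin m → ℝ) : norm2 v = ‖WithLp.toLp 2 v‖ := by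
  simp [norm2, EuclideanSpace.norm_eq, sq_abs]

lemma abs_norm2_sub_norm2_sub_le {m : ℕ} (β z₁ z₂ : Fin m → ℝ) :
    |norm2 (β - z₁) - norm2 (β - z₂)| ≤ norm2 (z₁ - z₂) := by
  simp only [norm2_eq_norm_toLp, WithLp.toLp_sub]
  exact (abs_norm_sub_norm_le _ _).trans_eq (by rw [sub_sub_sub_cancel_left, norm_sub_rev])

/-- For fixed `β` and `λ > 0`, componentwise bound:
`|η_{λ‖β−z₁‖₂}(z_{1,i}) − η_{λ‖β−z₂‖₂}(z_{2,i})| ≤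
  max(2|z_{1,i} − z_{2,i}|, |z_{1,i} − z_{2,i}| + λ‖z₁ − z₂‖₂)`. -/
theorem coordinatewise_lipschitz_in_z {m : ℕ} (β : Fin m → ℝ) (lam : ℝ)
    (hlam : 0 < lam) :
    ∀ (z₁ z₂ : Fin m → ℝ) (i : Fin m),
      |soft (lam * norm2 (β - z₁)) (z₁ i) - soft (lam * norm2 (β - z₂)) (z₂ i)| ≤
        max (2 * |z₁ i - z₂ i|) (|z₁ i - z₂ i| + lam * norm2 (z₁ - z₂)) := by
  intro z₁ z₂ i
  have hthreshold : |lam * norm2 (β - z₁) - lam * norm2 (β - z₂)| ≤ lam * norm2 (z₁ - z₂) := by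
    rw [← mul_sub, abs_mul, abs_of_pos hlam]
    exact mul_le_mul_of_nonneg_left (abs_norm2_sub_norm2_sub_le β z₁ z₂) hlam.le
  have hnonneg (z : Fin m → ℝ) : 0 ≤ lam * norm2 (β - z) :=
    mul_nonneg hlam.le (Real.sqrt_nonneg _)
  calc _ ≤ |z₁ i - z₂ i| + max |z₁ i - z₂ i| |lam * norm2 (β - z₁) - lam * norm2 (β - z₂)| :=
        abs_soft_sub_soft_le (hnonneg z₁) (hnonneg z₂) _ _
    _ ≤ |z₁ i - z₂ i| + max |z₁ i - z₂ i| (lam * norm2 (z₁ - z₂)) := by gcongr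
    _ = _ := by rw [two_mul, max_add_add_left]
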